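/- arXiv:1112.2624 — 4 statements merged into one kernel-verified Lean document; each statement's English description precedes it below -/
import Mathlib

section
/- Let n ≥ 1, let u be an n×n upper-triangular complex matrix with 1's on the diagonal, and let λ be an n×n strictly lower-triangular complex matrix. Define u.λ to be the strictly lower-triangular part of uλu⁻¹. Then for all indices i, j with 1 ≤ j < i ≤ n, the rank of the lower-left submatrix of u.λ consisting of rows i,…,n and columns 1,…,j equals the rank of the corresponding submatrix of λ. -/
open Matrix

/-- The strictly lower-triangular part of a matrix. -/
def lowPart {n : ℕ} (A : Matrix (Fin n) (Fin n) ℂ) : Matrix (Fin n) (Fin n) ℂ :=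
  fun i j => if j < i then A i j else 0

/-- The rank of the lower-left submatrix with rows `i,…,n` and columns `1,…,j`. -/
noncomputable def lowRank {n : ℕ} (A : Matrix (Fin n) (Fin n) ℂ) (i j : Fin n) : ℕ :=
  (A.submatrix (fun k : {k : Fin n // i ≤ k} => (k : Fin n))
               (fun l : {l : Fin n // l ≤ j} => (l : Fin n))).rank

theorem stmt0 (n : ℕ) (hn : 1 ≤ n) (u lam : Matrix (Fin n) (Fin n) ℂ)
    (hu_upper : ∀ k l : Fin n, l < k → u k l = 0)
    (hu_diag : ∀ k : Fin n, u k k = 1)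
    (hlam : ∀ k l : Fin n, k ≤ l → lam k l = 0)
    (i j : Fin n) (hij : j < i) :
    lowRank (lowPart (u * lam * u⁻¹)) i j = lowRank lam i j := by
  classical
  have hu_bt : u.BlockTriangular id := fun k l h => hu_upper k l h
  have hdet : u.det = 1 := by
    rw [Matrix.det_of_upperTriangular hu_bt]; simp [hu_diag]
  have hunit : IsUnit u.det := by simp [hdet]
  haveI : Invertible u := u.invertibleOfIsUnitDet hunit
  have hv_bt : (u⁻¹).BlockTriangular id :=
    Matrix.blockTriangular_inv_of_blockTriangular hu_bt
  have hv_upper : ∀ k l : Fin n, l < k → u⁻¹ k l = 0 := fun k l h => hv_bt h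
  have hv_diag : ∀ k : Fin n, u⁻¹ k k = 1 := by
    intro k
    have h1 : (u * u⁻¹) k k = 1 := by
      rw [Matrix.mul_nonsing_inv u hunit]; simp
    rw [Matrix.mul_apply, Finset.sum_eq_single k] at h1
    · rwa [hu_diag, one_mul] at h1
    · intro q _ hq
      rcases lt_or_gt_of_ne hq with h | h
      · rw [hu_upper k q h, zero_mul]
      · rw [hv_upper q k h, mul_zero]
    · simp
  -- summation lemmas
  have hsumS : ∀ (f : Fin n → ℂ), (∀ p, p < i → f p = 0) →
      ∑ p : {k : Fin n // i ≤ k}, f p = ∑ p, f p := by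
    intro f hf
    rw [← Finset.sum_subtype (Finset.univ.filter (fun p => i ≤ p)) (by simp) f]
    exact Finset.sum_filter_of_ne (fun x _ hx => le_of_not_gt fun h => hx (hf x h))
  have hsumT : ∀ (f : Fin n → ℂ), (∀ q, j < q → f q = 0) →
      ∑ q : {l : Fin n // l ≤ j}, f q = ∑ q, f q := by
    intro f hf
    rw [← Finset.sum_subtype (Finset.univ.filter (fun q => q ≤ j)) (by simp) f]
    exact Finset.sum_filter_of_ne (fun x _ hx => le_of_not_gt fun h => hx (hf x h))
  set B1 : Matrix {k : Fin n // i ≤ k} {k : Fin n // i ≤ k} ℂ :=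
    u.submatrix (fun k => (k : Fin n)) (fun k => (k : Fin n)) with hB1
  set B2 : Matrix {l : Fin n // l ≤ j} {l : Fin n // l ≤ j} ℂ :=
    (u⁻¹).submatrix (fun l => (l : Fin n)) (fun l => (l : Fin n)) with hB2
  set C : Matrix {k : Fin n // i ≤ k} {l : Fin n // l ≤ j} ℂ :=
    lam.submatrix (fun k => (k : Fin n)) (fun l => (l : Fin n)) with hC
  have key : (lowPart (u * lam * u⁻¹)).submatrix
      (fun k : {k : Fin n // i ≤ k} => (k : Fin n))
      (fun l : {l : Fin n // l ≤ j} => (l : Fin n)) = B1 * C * B2 := by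
    ext k l
    have hkl : (l : Fin n) < (k : Fin n) := lt_of_le_of_lt l.2 (lt_of_lt_of_le hij k.2)
    have e1 : (u * lam * u⁻¹) (k : Fin n) (l : Fin n)
        = ∑ q : {l : Fin n // l ≤ j}, (u * lam) (k : Fin n) (q : Fin n)
            * u⁻¹ (q : Fin n) (l : Fin n) := by
      rw [Matrix.mul_apply]
      exact (hsumT _ (fun q hq => by
        rw [hv_upper q l (lt_of_le_of_lt l.2 hq), mul_zero])).symm
    have e2 : ∀ q : Fin n, (u * lam) (k : Fin n) q
        = ∑ p : {k : Fin n // i ≤ k}, u (k : Fin n) (p : Fin n) * lam (p : Fin n) q := by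
      intro q
      rw [Matrix.mul_apply]
      exact (hsumS _ (fun p hp => by
        rw [hu_upper k p (lt_of_lt_of_le hp k.2), zero_mul])).symm
    simp only [Matrix.submatrix_apply, lowPart, if_pos hkl]
    rw [e1, Matrix.mul_apply]
    refine Finset.sum_congr rfl fun q _ => ?_
    rw [e2, Matrix.mul_apply]
    simp [hB1, hB2, hC]
  have hB1det : IsUnit B1.det := by
    have hbt : B1.BlockTriangular id := by
      intro a b h
      exact hu_upper _ _ (Subtype.coe_lt_coe.mpr h)
    rw [Matrix.det_of_upperTriangular hbt]
    simp [hB1, hu_diag]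
  have hB2det : IsUnit B2.det := by
    have hbt : B2.BlockTriangular id := by
      intro a b h
      exact hv_upper _ _ (Subtype.coe_lt_coe.mpr h)
    rw [Matrix.det_of_upperTriangular hbt]
    simp [hB2, hv_diag]
  unfold lowRank
  rw [key, Matrix.rank_mul_eq_left_of_isUnit_det _ _ hB2det,
    Matrix.rank_mul_eq_right_of_isUnit_det _ _ hB1det]
end

section
/- Let σ, τ be involutions in S_n. Define R_σ by (R_σ)_{i,j} = (number of pairs (k,l) with k ≥ i, l ≤ j, σ(k) = l), and let R*_σ be the strictly lower-triangular part of R_σ (i.e., (R*_σ)_{i,j} = (R_σ)_{i,j} if i > j and 0 otherwise). Then (R_σ)_{i,j} ≤ (R_τ)_{i,j} for all i, j if and only if (R*_σ)_{i,j} ≤ (R*_τ)_{i,j} for all i, j. -/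
/-- The rank matrix of a permutation: `(R σ) i j` is the number of `k ≥ i` with `σ k ≤ j`. -/
def rankMat {n : ℕ} (σ : Equiv.Perm (Fin n)) : Matrix (Fin n) (Fin n) ℕ :=
  fun i j => (Finset.univ.filter (fun k : Fin n => i ≤ k ∧ σ k ≤ j)).card

/-- The strictly lower-triangular part of the rank matrix. -/
def rankMatStar {n : ℕ} (σ : Equiv.Perm (Fin n)) : Matrix (Fin n) (Fin n) ℕ :=
  fun i j => if j < i then rankMat σ i j else 0

/-!
Counting the points of `σ` in the columns `≤ j` and in the rows `< i` gives
`R σ i j + i = j + 1 + N`, where `N` counts the points `(k, σ k)` with `k < i` and `σ k > j`.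
For an involution the point set is symmetric, so `N` is also the number of points with `k > j`
and `σ k < i`, i.e. the entry `R σ (j + 1) (i - 1)`, which lies strictly below the diagonal
whenever `i ≤ j`. Hence the entries of `R σ` on and above the diagonal are determined,
monotonically, by those strictly below it.
-/

open Finset

namespace Equiv.Perm

variable {n : ℕ} (σ : Equiv.Perm (Fin n))

lemma card_filter_apply_le (j : Fin n) : #{k | σ k ≤ j} = j + 1 := by
  rw [← Fin.card_Iic, ← card_map σ.toEmbedding]
  congr 1
  ext k
  simp

lemma rankMat_add_eq (i j : Fin n) :
    rankMat σ i j + i = j + 1 + #{k | k < i ∧ j < σ k} := by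
  have hcols : rankMat σ i j + #{k | k < i ∧ σ k ≤ j} = j + 1 := by
    rw [← σ.card_filter_apply_le j,
      ← card_filter_add_card_filter_not (s := {k | σ k ≤ j}) (fun k => i ≤ k)]
    unfold rankMat
    congr 2 <;> ext k <;> simp [and_comm]
  have hrows : #{k | k < i ∧ σ k ≤ j} + #{k | k < i ∧ j < σ k} = i := by
    rw [← Fin.card_Iio, ← card_filter_add_card_filter_not (s := Iio i) (fun k => σ k ≤ j)]
    congr 2 <;> ext k <;> simp
  omega

variable {σ}

lemma card_lt_gt_eq_card_gt_lt (hσ : Function.Involutive σ) (i j : Fin n) :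
    #{k | k < i ∧ j < σ k} = #{k | j < k ∧ σ k < i} := by
  apply card_nbij' σ σ <;> intro k <;> simp [hσ k, and_comm]

lemma card_gt_lt_eq_rankMat {i j i' j' : Fin n} (hi : (i : ℕ) = i' + 1) (hj : (j' : ℕ) = j + 1) :
    #{k | j < k ∧ σ k < i} = rankMat σ j' i' := by
  unfold rankMat
  congr 1
  ext k
  simp only [mem_filter, mem_univ, true_and, Fin.lt_def, Fin.le_def]
  omega

end Equiv.Perm

open Equiv.Perm

variable {n : ℕ} {σ τ : Equiv.Perm (Fin n)}

lemma rankMatStar_le_of_rankMat_le (h : ∀ i j, rankMat σ i j ≤ rankMat τ i j) (i j : Fin n) :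
    rankMatStar σ i j ≤ rankMatStar τ i j := by
  unfold rankMatStar
  split_ifs
  exacts [h i j, le_rfl]

lemma card_gt_lt_le_of_rankMatStar_le (h : ∀ i j, rankMatStar σ i j ≤ rankMatStar τ i j)
    {i j : Fin n} (hij : i ≤ j) :
    #{k | j < k ∧ σ k < i} ≤ #{k | j < k ∧ τ k < i} := by
  by_cases hcorner : 0 < (i : ℕ) ∧ (j : ℕ) + 1 < n
  · let i' : Fin n := ⟨i - 1, by omega⟩
    let j' : Fin n := ⟨j + 1, hcorner.2⟩
    have hi : (i : ℕ) = i' + 1 := by simp [i']; omega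
    have hj : (j' : ℕ) = j + 1 := rfl
    have hlower : i' < j' := by rw [Fin.lt_def]; omega
    have := h j' i'
    simp only [rankMatStar, if_pos hlower] at this
    rwa [card_gt_lt_eq_rankMat hi hj, card_gt_lt_eq_rankMat hi hj]
  · suffices #{k | j < k ∧ σ k < i} = 0 by omega
    refine card_eq_zero.2 (filter_false_of_mem fun k _ hk => hcorner ?_)
    have := k.isLt
    rw [Fin.lt_def, Fin.lt_def] at hk
    omega

theorem stmt2 (n : ℕ) (σ τ : Equiv.Perm (Fin n))
    (hσ : σ * σ = 1) (hτ : τ * τ = 1) :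
    (∀ i j : Fin n, rankMat σ i j ≤ rankMat τ i j) ↔
      (∀ i j : Fin n, rankMatStar σ i j ≤ rankMatStar τ i j) := by
  refine ⟨rankMatStar_le_of_rankMat_le, fun h i j => ?_⟩
  rcases lt_or_ge j i with hji | hij
  · simpa [rankMatStar, hji] using h i j
  · have hσi : Function.Involutive σ := fun k => DFunLike.congr_fun hσ k
    have hτi : Function.Involutive τ := fun k => DFunLike.congr_fun hτ k
    have := card_gt_lt_le_of_rankMatStar_le h hij
    have hσeq := σ.rankMat_add_eq i j
    have hτeq := τ.rankMat_add_eq i j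
    rw [card_lt_gt_eq_card_gt_lt hσi] at hσeq
    rw [card_lt_gt_eq_card_gt_lt hτi] at hτeq
    omega
end

section
/- Every involution σ in the Weyl group W(C_n) (realized as signed permutations) can be written as σ = ∏_{α ∈ D} r_α for some orthogonal subset D ⊂ Φ⁺(C_n), and there is exactly one such orthogonal subset D with the additional property that no two roots α, β ∈ D satisfy α − β ∈ Φ⁺. -/
open Matrix

/-- The standard basis vector `ε_i` of `ℝⁿ`. -/
def eps {n : ℕ} (i : Fin n) : Fin n → ℝ := Pi.single i 1

/-- The positive roots of `C_n`. -/
def PosRoots (n : ℕ) : Set (Fin n → ℝ) :=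
  {v | (∃ i j : Fin n, i < j ∧ (v = eps i - eps j ∨ v = eps i + eps j)) ∨
       (∃ i : Fin n, v = (2 : ℝ) • eps i)}

/-- The reflection `r_a(v) = v − 2(v,a)/(a,a) · a` as a linear endomorphism of `ℝⁿ`. -/
noncomputable def reflEnd {n : ℕ} (a : Fin n → ℝ) : Module.End ℝ (Fin n → ℝ) :=
  LinearMap.id -
    (2 / (a ⬝ᵥ a)) • ((∑ i, a i • (LinearMap.proj i : (Fin n → ℝ) →ₗ[ℝ] ℝ)).smulRight a)

/-- The Weyl group of `C_n`, realized as the (sub)monoid of endomorphisms of `ℝⁿ` generated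
by the reflections in the roots (each reflection is an involution, so this monoid closure
is in fact a group of signed permutations of the coordinates). -/
noncomputable def WeylC (n : ℕ) : Submonoid (Module.End ℝ (Fin n → ℝ)) :=
  Submonoid.closure (reflEnd '' PosRoots n)

/-- `σ` is the product of the reflections in the members of the finite set `D`
(in any order; for the sets considered the reflections commute). -/
def isProdOfRefls {n : ℕ} (D : Finset (Fin n → ℝ)) (σ : Module.End ℝ (Fin n → ℝ)) : Prop :=
  ∀ l : List (Fin n → ℝ), l.Nodup → l.toFinset = D → (l.map reflEnd).prod = σ

/-!
An involution `σ ∈ W(C_n)` is a signed permutation `ε_i ↦ s_i ε_{π i}` with `π` an involution and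
`s` constant on the orbits of `π`. For roots with pairwise disjoint supports, the product of their
reflections, in any order, acts on `ε_i` as the one reflection whose root involves `i` (and fixes
`ε_i` if there is none). So `σ` is the product of the reflections in `ε_i - s_i ε_{π i}` for the
orbits `i < π i` and in `2ε_i` for the fixed points with `s_i = -1`; no two of these roots differ
by a positive root, since every positive root has `ℓ¹`-norm `2`.

Conversely, orthogonal positive roots of `C_n` no two of which differ by a positive root have
disjoint supports: the only orthogonal pairs with overlapping supports are `ε_i ∓ ε_j`, which
differ by `±2ε_j`. Hence each member `ε_i - s ε_j` of such a set with product `σ` is read off from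
`σ ε_i = s ε_j`, and the set is unique.
-/

open Function

lemma eq_min_of_mem_pair {α : Type*} [LinearOrder α] {π : α → α} (hπ : Involutive π) {i m : α}
    (hi : i ≤ π i) (hm : m = i ∨ m = π i) : i = min m (π m) := by
  rcases hm with rfl | rfl
  · exact (min_eq_left hi).symm
  · rw [hπ i, min_eq_right hi]

section
variable {n : ℕ}

lemma eps_apply (i k : Fin n) : eps i k = if k = i then 1 else 0 := Pi.single_apply i 1 k

lemma eps_dotProduct (i : Fin n) (v : Fin n → ℝ) : eps i ⬝ᵥ v = v i := by
  simp [eps, single_dotProduct]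

lemma support_eps (i : Fin n) : support (eps i) = {i} := by
  ext k; simp [eps_apply]

lemma smul_eps_inj {s t : ℝ} {i j : Fin n} (hs : s ≠ 0) (h : s • eps i = t • eps j) :
    s = t ∧ i = j := by
  have hi := congrFun h i
  by_cases hij : i = j
  · subst hij; simpa [eps_apply] using hi
  · simp [eps_apply, hij, hs] at hi

lemma dotProduct_eq_zero_of_disjoint {a b : Fin n → ℝ} (h : Disjoint (support a) (support b)) :
    a ⬝ᵥ b = 0 :=
  Finset.sum_eq_zero fun m _ => by
    by_cases ha : a m = 0
    · simp [ha]
    · simp [notMem_support.1 (Set.disjoint_left.1 h (mem_support.2 ha))]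

lemma reflEnd_apply (a v : Fin n → ℝ) :
    reflEnd a v = v - (2 / (a ⬝ᵥ a) * (a ⬝ᵥ v)) • a := by
  simp only [reflEnd, LinearMap.sub_apply, LinearMap.id_apply, LinearMap.smul_apply,
    LinearMap.smulRight_apply, LinearMap.sum_apply, LinearMap.proj_apply, smul_eq_mul,
    dotProduct, smul_smul]

lemma reflEnd_apply_of_disjoint {a v : Fin n → ℝ} (h : Disjoint (support a) (support v)) :
    reflEnd a v = v := by
  simp [reflEnd_apply, dotProduct_eq_zero_of_disjoint h]

lemma support_reflEnd_apply_subset (a v : Fin n → ℝ) :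
    support (reflEnd a v) ⊆ support v ∪ support a := by
  rw [reflEnd_apply]
  exact (support_sub _ _).trans (Set.union_subset_union_right _ (support_smul_subset_right _ _))

lemma prod_map_reflEnd_apply_of_disjoint {l : List (Fin n → ℝ)} {v : Fin n → ℝ}
    (h : ∀ a ∈ l, Disjoint (support a) (support v)) : (l.map reflEnd).prod v = v := by
  induction l with
  | nil => simp
  | cons b t ih =>
    simp only [List.map_cons, List.prod_cons, Module.End.mul_apply]
    rw [ih fun a ha => h a (List.mem_cons_of_mem _ ha), reflEnd_apply_of_disjoint (h b (by simp))]

lemma prod_map_reflEnd_apply_of_mem {l : List (Fin n → ℝ)}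
    (hl : l.Pairwise (Disjoint on support)) {a v : Fin n → ℝ} (ha : a ∈ l)
    (hv : support v ⊆ support a) : (l.map reflEnd).prod v = reflEnd a v := by
  have hrefl : support (reflEnd a v) ⊆ support a :=
    (support_reflEnd_apply_subset a v).trans (Set.union_subset hv subset_rfl)
  induction l with
  | nil => simp at ha
  | cons b t ih =>
    rw [List.pairwise_cons] at hl
    simp only [List.map_cons, List.prod_cons, Module.End.mul_apply]
    rcases List.mem_cons.1 ha with rfl | hat
    · rw [prod_map_reflEnd_apply_of_disjoint fun c hc => ((hl.1 c hc).symm.mono_right hv)]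
    · rw [ih hl.2 hat]
      exact reflEnd_apply_of_disjoint ((hl.1 a hat).mono_right hrefl)

lemma isProdOfRefls_iff {D : Finset (Fin n → ℝ)}
    (hD : (D : Set (Fin n → ℝ)).Pairwise (Disjoint on support)) {σ : Module.End ℝ (Fin n → ℝ)} :
    isProdOfRefls D σ ↔ ∀ k, (∀ a ∈ D, a k ≠ 0 → σ (eps k) = reflEnd a (eps k)) ∧
      ((∀ a ∈ D, a k = 0) → σ (eps k) = eps k) := by
  have hprod : ∀ l : List (Fin n → ℝ), l.Nodup → l.toFinset = D → ∀ k,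
      (∀ a ∈ D, a k ≠ 0 → (l.map reflEnd).prod (eps k) = reflEnd a (eps k)) ∧
      ((∀ a ∈ D, a k = 0) → (l.map reflEnd).prod (eps k) = eps k) := by
    intro l hnd hlD k
    have hmem : ∀ a, a ∈ l ↔ a ∈ D := fun a => by rw [← hlD, List.mem_toFinset]
    have hl : l.Pairwise (Disjoint on support) :=
      hnd.pairwise_of_set_pairwise (by simpa [Set.subset_def, hmem] using hD)
    refine ⟨fun a ha hak => prod_map_reflEnd_apply_of_mem hl ((hmem a).2 ha) ?_, fun h => ?_⟩
    · simpa [support_eps] using hak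
    · exact prod_map_reflEnd_apply_of_disjoint fun a ha => by
        simpa [support_eps] using h a ((hmem a).1 ha)
  constructor
  · intro hσ
    simpa [hσ D.toList D.nodup_toList D.toList_toFinset] using
      hprod D.toList D.nodup_toList D.toList_toFinset
  · intro hσ l hnd hlD
    refine (Pi.basisFun ℝ (Fin n)).ext fun k => ?_
    simp only [Pi.basisFun_apply]
    change (l.map reflEnd).prod (eps k) = σ (eps k)
    by_cases hk : ∃ a ∈ D, a k ≠ 0
    · obtain ⟨a, ha, hak⟩ := hk
      rw [(hprod l hnd hlD k).1 a ha hak, (hσ k).1 a ha hak]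
    · push Not at hk
      rw [(hprod l hnd hlD k).2 hk, (hσ k).2 hk]

/-- `eps i - s • eps j` is `ε_i - ε_j` for `s = 1`, `ε_i + ε_j` for `s = -1, i < j` and `2ε_i`
for `s = -1, i = j`; this covers each positive root of `C_n` exactly once. -/
def IsPosRootIndex (i j : Fin n) (s : ℝ) : Prop := s = -1 ∧ i ≤ j ∨ s = 1 ∧ i < j

namespace IsPosRootIndex

variable {i j : Fin n} {s : ℝ}

lemma le (h : IsPosRootIndex i j s) : i ≤ j := by
  rcases h with ⟨-, h⟩ | ⟨-, h⟩
  exacts [h, h.le]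

lemma sign (h : IsPosRootIndex i j s) : s = 1 ∨ s = -1 := by
  rcases h with ⟨rfl, -⟩ | ⟨rfl, -⟩ <;> simp

lemma eq_neg_one_of_self (h : IsPosRootIndex i i s) : s = -1 := by
  rcases h with ⟨h, -⟩ | ⟨-, h⟩
  exacts [h, absurd h (lt_irrefl i)]

end IsPosRootIndex

lemma mem_posRoots_iff {a : Fin n → ℝ} :
    a ∈ PosRoots n ↔ ∃ i j s, IsPosRootIndex i j s ∧ a = eps i - s • eps j := by
  constructor
  · rintro (⟨i, j, hij, rfl | rfl⟩ | ⟨i, rfl⟩)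
    · exact ⟨i, j, 1, Or.inr ⟨rfl, hij⟩, by simp⟩
    · exact ⟨i, j, -1, Or.inl ⟨rfl, hij.le⟩, by simp⟩
    · exact ⟨i, i, -1, Or.inl ⟨rfl, le_rfl⟩, by module⟩
  · rintro ⟨i, j, s, ⟨rfl, hij⟩ | ⟨rfl, hij⟩, rfl⟩
    · rcases hij.lt_or_eq with hij | rfl
      · exact Or.inl ⟨i, j, hij, Or.inr (by simp)⟩
      · exact Or.inr ⟨i, by module⟩
    · exact Or.inl ⟨i, j, hij, Or.inl (by simp)⟩

lemma support_root {i j : Fin n} {s : ℝ} (h : IsPosRootIndex i j s) :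
    support (eps i - s • eps j) = {i, j} := by
  ext m
  simp only [mem_support, Pi.sub_apply, Pi.smul_apply, eps_apply, smul_eq_mul,
    Set.mem_insert_iff, Set.mem_singleton_iff]
  rcases h with ⟨rfl, hij⟩ | ⟨rfl, hij⟩ <;>
    rcases eq_or_ne m i with rfl | hmi <;> rcases eq_or_ne m j with rfl | hmj <;>
    simp [*]; omega

lemma reflEnd_root_apply_eps {i j : Fin n} {s : ℝ} (h : IsPosRootIndex i j s) (k : Fin n) :
    reflEnd (eps i - s • eps j) (eps k) =
      if k = i then s • eps j else if k = j then s • eps i else eps k := by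
  have hdot : ∀ v, (eps i - s • eps j) ⬝ᵥ v = v i - s * v j := fun v => by
    simp [sub_dotProduct, eps_dotProduct]
  rw [reflEnd_apply, hdot, hdot]
  funext m
  rcases eq_or_ne i j with rfl | hij
  · obtain rfl := h.eq_neg_one_of_self
    rcases eq_or_ne k i with rfl | hki
    · simp [eps_apply]; split_ifs <;> norm_num
    · simp [eps_apply, hki, hki.symm]
  · have hs : s * s = 1 := by rcases h.sign with rfl | rfl <;> norm_num
    rcases eq_or_ne k i with rfl | hki
    · simp [eps_apply, hij, hij.symm]; split_ifs <;> simp_all <;> norm_num [mul_assoc, hs]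
    rcases eq_or_ne k j with rfl | hkj
    · simp [eps_apply, hij, hij.symm]; split_ifs <;> simp_all <;> norm_num [mul_assoc, hs]
    · simp [eps_apply, hki, hkj, hki.symm, hkj.symm]

lemma dotProduct_root_root (i j p q : Fin n) (s t : ℝ) :
    (eps i - s • eps j) ⬝ᵥ (eps p - t • eps q) =
      (if i = p then 1 else 0) - t * (if i = q then 1 else 0) - s * (if j = p then 1 else 0)
        + s * t * (if j = q then 1 else 0) := by
  simp only [sub_dotProduct, smul_dotProduct, eps_dotProduct, Pi.sub_apply, Pi.smul_apply,
    eps_apply, smul_eq_mul]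
  split_ifs <;> simp_all [eq_comm] <;> ring

lemma eq_of_dotProduct_root_eq_zero {i j p q : Fin n} {s t : ℝ} (hijs : IsPosRootIndex i j s)
    (hpqt : IsPosRootIndex p q t) (hover : ¬Disjoint ({i, j} : Set (Fin n)) {p, q})
    (h : (eps i - s • eps j) ⬝ᵥ (eps p - t • eps q) = 0) : i = p ∧ j = q ∧ t = -s := by
  obtain ⟨m, hm1, hm2⟩ := Set.not_disjoint_iff.1 hover
  simp only [Set.mem_insert_iff, Set.mem_singleton_iff] at hm1 hm2
  rw [dotProduct_root_root] at h
  rcases hijs with ⟨rfl, hij⟩ | ⟨rfl, hij⟩ <;> rcases hpqt with ⟨rfl, hpq⟩ | ⟨rfl, hpq⟩ <;>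
    split_ifs at h <;>
    first | omega | (exfalso; linarith) | exact ⟨‹_›, ‹_›, by norm_num⟩

lemma disjoint_support_of_dotProduct_eq_zero {a b : Fin n → ℝ} (ha : a ∈ PosRoots n)
    (hb : b ∈ PosRoots n) (hab : a ⬝ᵥ b = 0) (hab' : a - b ∉ PosRoots n)
    (hba : b - a ∉ PosRoots n) : Disjoint (support a) (support b) := by
  obtain ⟨i, j, s, hijs, rfl⟩ := mem_posRoots_iff.1 ha
  obtain ⟨p, q, t, hpqt, rfl⟩ := mem_posRoots_iff.1 hb
  rw [support_root hijs, support_root hpqt]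
  by_contra hover
  obtain ⟨rfl, rfl, rfl⟩ := eq_of_dotProduct_root_eq_zero hijs hpqt hover hab
  have h2j : (2 : ℝ) • eps j ∈ PosRoots n := Or.inr ⟨j, rfl⟩
  rcases hijs with ⟨rfl, -⟩ | ⟨rfl, -⟩
  · exact hab' (by convert h2j using 1; module)
  · exact hba (by convert h2j using 1; module)

lemma sum_abs_eq_two {a : Fin n → ℝ} (ha : a ∈ PosRoots n) : ∑ m, |a m| = 2 := by
  obtain ⟨i, j, s, h, rfl⟩ := mem_posRoots_iff.1 ha
  rcases eq_or_ne i j with rfl | hij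
  · rw [h.eq_neg_one_of_self, Fintype.sum_eq_single i fun m hm => by simp [eps_apply, hm]]
    simp [eps_apply]; norm_num
  · have hs : |s| = 1 := by rcases h.sign with rfl | rfl <;> simp
    rw [Fintype.sum_eq_add i j hij fun m hm => by simp [eps_apply, hm.1, hm.2]]
    simp [eps_apply, hij, hij.symm, hs]; norm_num

lemma zero_notMem_posRoots : (0 : Fin n → ℝ) ∉ PosRoots n := fun h => by
  simpa using sum_abs_eq_two h

lemma sub_notMem_posRoots {a b : Fin n → ℝ} (ha : a ∈ PosRoots n) (hb : b ∈ PosRoots n)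
    (hab : Disjoint (support a) (support b)) : a - b ∉ PosRoots n := by
  intro h
  have hsum : ∑ m, |(a - b) m| = ∑ m, |a m| + ∑ m, |b m| := by
    rw [← Finset.sum_add_distrib]
    refine Finset.sum_congr rfl fun m _ => ?_
    by_cases ham : a m = 0
    · simp [ham]
    · simp [notMem_support.1 (Set.disjoint_left.1 hab (mem_support.2 ham))]
  rw [sum_abs_eq_two h, sum_abs_eq_two ha, sum_abs_eq_two hb] at hsum
  norm_num at hsum

def IsSignedPerm (σ : Module.End ℝ (Fin n → ℝ)) : Prop :=
  ∀ i, ∃ (s : ℝ) (j : Fin n), (s = 1 ∨ s = -1) ∧ σ (eps i) = s • eps j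

lemma isSignedPerm_of_mem_weylC {σ : Module.End ℝ (Fin n → ℝ)} (hσ : σ ∈ WeylC n) :
    IsSignedPerm σ := by
  induction hσ using Submonoid.closure_induction with
  | mem x hx =>
    obtain ⟨a, ha, rfl⟩ := hx
    obtain ⟨i, j, s, h, rfl⟩ := mem_posRoots_iff.1 ha
    intro k
    rw [reflEnd_root_apply_eps h]
    split_ifs
    · exact ⟨s, j, h.sign, rfl⟩
    · exact ⟨s, i, h.sign, rfl⟩
    · exact ⟨1, k, Or.inl rfl, (one_smul ℝ _).symm⟩
  | one => exact fun i => ⟨1, i, Or.inl rfl, (one_smul ℝ _).symm⟩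
  | mul x y _ _ hx hy =>
    intro i
    obtain ⟨s, j, hs, hyi⟩ := hy i
    obtain ⟨t, k, ht, hxj⟩ := hx j
    refine ⟨s * t, k, ?_, ?_⟩
    · rcases hs with rfl | rfl <;> rcases ht with rfl | rfl <;> norm_num
    · rw [Module.End.mul_apply, hyi, map_smul, hxj, smul_smul]

lemma involutive_of_mul_self_eq_one {σ : Module.End ℝ (Fin n → ℝ)} (hσ2 : σ * σ = 1)
    {s : Fin n → ℝ} {π : Fin n → Fin n} (hs : ∀ i, s i = 1 ∨ s i = -1)
    (hσ : ∀ i, σ (eps i) = s i • eps (π i)) : Involutive π ∧ ∀ i, s (π i) = s i := by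
  have h : ∀ i, (1 : ℝ) • eps i = (s i * s (π i)) • eps (π (π i)) := fun i => by
    rw [one_smul, ← smul_smul, ← hσ, ← map_smul, ← hσ, ← Module.End.mul_apply, hσ2,
      Module.End.one_apply]
  refine ⟨fun i => (smul_eps_inj one_ne_zero (h i)).2.symm, fun i => ?_⟩
  have := (smul_eps_inj one_ne_zero (h i)).1
  rcases hs i with h | h <;> rcases hs (π i) with h' | h' <;> rw [h, h'] at this ⊢ <;>
    norm_num at this

open scoped Classical in
/-- One root per orbit of `π`, namely `ε_i - s_i ε_{π i}` for `i = min (orbit)`, except at the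
fixed points with `s_i = 1`. -/
noncomputable def orbitRoots (s : Fin n → ℝ) (π : Fin n → Fin n) : Finset (Fin n → ℝ) :=
  (Finset.univ.filter fun i => IsPosRootIndex i (π i) (s i)).image fun i => eps i - s i • eps (π i)

section orbitRoots

variable {s : Fin n → ℝ} {π : Fin n → Fin n}

lemma mem_orbitRoots {a : Fin n → ℝ} :
    a ∈ orbitRoots s π ↔ ∃ i, IsPosRootIndex i (π i) (s i) ∧ eps i - s i • eps (π i) = a := by
  simp [orbitRoots]

lemma orbitRoots_subset_posRoots : ↑(orbitRoots s π) ⊆ PosRoots n := fun a ha => by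
  obtain ⟨i, hi, rfl⟩ := mem_orbitRoots.1 ha
  exact mem_posRoots_iff.2 ⟨i, π i, s i, hi, rfl⟩

lemma pairwise_disjoint_support_orbitRoots (hπ : Involutive π) :
    (orbitRoots s π : Set (Fin n → ℝ)).Pairwise (Disjoint on support) := by
  rintro _ ha _ hb hab
  obtain ⟨i, hi, rfl⟩ := mem_orbitRoots.1 ha
  obtain ⟨p, hp, rfl⟩ := mem_orbitRoots.1 hb
  refine Set.disjoint_left.2 fun m hmi hmp => hab ?_
  rw [support_root hi] at hmi
  rw [support_root hp] at hmp
  rw [(eq_min_of_mem_pair hπ hi.le hmi).trans (eq_min_of_mem_pair hπ hp.le hmp).symm]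

lemma isProdOfRefls_orbitRoots {σ : Module.End ℝ (Fin n → ℝ)} (hs : ∀ i, s i = 1 ∨ s i = -1)
    (hπ : Involutive π) (hsπ : ∀ i, s (π i) = s i) (hσ : ∀ i, σ (eps i) = s i • eps (π i)) :
    isProdOfRefls (orbitRoots s π) σ := by
  refine (isProdOfRefls_iff (pairwise_disjoint_support_orbitRoots hπ)).2 fun k => ⟨?_, ?_⟩
  · intro a ha hak
    obtain ⟨i, hi, rfl⟩ := mem_orbitRoots.1 ha
    have hk : k = i ∨ k = π i := by simpa [support_root hi] using mem_support.2 hak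
    rw [hσ, reflEnd_root_apply_eps hi]
    split_ifs with hki hkπ
    · rw [hki]
    · rw [hkπ, hπ i, hsπ]
    · tauto
  · intro hk
    obtain ⟨i, hi, hki⟩ : ∃ i, i ≤ π i ∧ (k = i ∨ k = π i) := by
      rcases le_total k (π k) with h | h
      · exact ⟨k, h, Or.inl rfl⟩
      · exact ⟨π k, by rwa [hπ k], Or.inr (hπ k).symm⟩
    have hnot : ¬IsPosRootIndex i (π i) (s i) := fun hadm =>
      (mem_support.1 (by rw [support_root hadm]; exact hki))
        (hk _ (mem_orbitRoots.2 ⟨i, hadm, rfl⟩))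
    have hfix : π i = i ∧ s i = 1 := by
      rcases hs i with h | h
      · exact ⟨(hi.lt_or_eq.resolve_left fun hlt => hnot (Or.inr ⟨h, hlt⟩)).symm, h⟩
      · exact absurd (Or.inl ⟨h, hi⟩) hnot
    obtain rfl : k = i := by rcases hki with h | h; exacts [h, h.trans hfix.1]
    rw [hσ, hfix.1, hfix.2, one_smul]

end orbitRoots

lemma exists_disjoint_posRoots_isProdOfRefls {σ : Module.End ℝ (Fin n → ℝ)}
    (hσ : IsSignedPerm σ) (hσ2 : σ * σ = 1) :
    ∃ D : Finset (Fin n → ℝ), ↑D ⊆ PosRoots n ∧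
      (D : Set (Fin n → ℝ)).Pairwise (Disjoint on support) ∧ isProdOfRefls D σ := by
  choose s π hs hσπ using hσ
  obtain ⟨hπ, hsπ⟩ := involutive_of_mul_self_eq_one hσ2 hs hσπ
  exact ⟨orbitRoots s π, orbitRoots_subset_posRoots, pairwise_disjoint_support_orbitRoots hπ,
    isProdOfRefls_orbitRoots hs hπ hsπ hσπ⟩

def IsCanonicalRoot (σ : Module.End ℝ (Fin n → ℝ)) (a : Fin n → ℝ) : Prop :=
  ∃ i j s, IsPosRootIndex i j s ∧ a = eps i - s • eps j ∧ σ (eps i) = s • eps j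

lemma mem_iff_isCanonicalRoot {D : Finset (Fin n → ℝ)} {σ : Module.End ℝ (Fin n → ℝ)}
    (hD : ↑D ⊆ PosRoots n) (hdisj : (D : Set (Fin n → ℝ)).Pairwise (Disjoint on support))
    (hσ : isProdOfRefls D σ) (a : Fin n → ℝ) : a ∈ D ↔ IsCanonicalRoot σ a := by
  have hσ := (isProdOfRefls_iff hdisj).1 hσ
  constructor
  · intro ha
    obtain ⟨i, j, s, h, rfl⟩ := mem_posRoots_iff.1 (hD ha)
    have hi : (eps i - s • eps j) i ≠ 0 := mem_support.1 (by rw [support_root h]; exact Or.inl rfl)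
    refine ⟨i, j, s, h, rfl, ?_⟩
    rw [(hσ i).1 _ ha hi, reflEnd_root_apply_eps h, if_pos rfl]
  · rintro ⟨i, j, s, h, rfl, hσi⟩
    by_cases hcov : ∃ b ∈ D, b i ≠ 0
    · obtain ⟨b, hb, hbi⟩ := hcov
      obtain ⟨p, q, t, h', rfl⟩ := mem_posRoots_iff.1 (hD hb)
      have ht : t ≠ 0 := by rcases h'.sign with rfl | rfl <;> norm_num
      rw [(hσ i).1 _ hb hbi, reflEnd_root_apply_eps h'] at hσi
      have hipq : i = p ∨ i = q := by simpa [support_root h'] using mem_support.2 hbi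
      split_ifs at hσi with hip hiq
      · obtain ⟨rfl, rfl⟩ := smul_eps_inj ht hσi
        rwa [hip]
      · obtain ⟨rfl, rfl⟩ := smul_eps_inj ht hσi
        have := h.le; have := h'.le
        omega
      · tauto
    · push Not at hcov
      rw [(hσ i).2 hcov] at hσi
      obtain ⟨rfl, rfl⟩ := smul_eps_inj one_ne_zero ((one_smul ℝ _).trans hσi)
      exact absurd h.eq_neg_one_of_self (by norm_num)

end

theorem stmt8 (n : ℕ) (σ : Module.End ℝ (Fin n → ℝ))
    (hσW : σ ∈ WeylC n) (hσ2 : σ * σ = 1) :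
    (∃ D : Finset (Fin n → ℝ), ↑D ⊆ PosRoots n ∧
      (∀ a ∈ D, ∀ b ∈ D, a ≠ b → a ⬝ᵥ b = 0) ∧ isProdOfRefls D σ) ∧
    (∃! D : Finset (Fin n → ℝ), ↑D ⊆ PosRoots n ∧
      (∀ a ∈ D, ∀ b ∈ D, a ≠ b → a ⬝ᵥ b = 0) ∧
      (∀ a ∈ D, ∀ b ∈ D, a - b ∉ PosRoots n) ∧ isProdOfRefls D σ) := by
  obtain ⟨D, hDroots, hDdisj, hDprod⟩ :=
    exists_disjoint_posRoots_isProdOfRefls (isSignedPerm_of_mem_weylC hσW) hσ2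
  have hDorth : ∀ a ∈ D, ∀ b ∈ D, a ≠ b → a ⬝ᵥ b = 0 := fun a ha b hb hab =>
    dotProduct_eq_zero_of_disjoint (hDdisj ha hb hab)
  have hDsub : ∀ a ∈ D, ∀ b ∈ D, a - b ∉ PosRoots n := fun a ha b hb => by
    rcases eq_or_ne a b with rfl | hab
    · simpa using zero_notMem_posRoots
    · exact sub_notMem_posRoots (hDroots ha) (hDroots hb) (hDdisj ha hb hab)
  refine ⟨⟨D, hDroots, hDorth, hDprod⟩, D, ⟨hDroots, hDorth, hDsub, hDprod⟩, ?_⟩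
  rintro D' ⟨hD'roots, hD'orth, hD'sub, hD'prod⟩
  have hD'disj : (D' : Set (Fin n → ℝ)).Pairwise (Disjoint on support) := fun a ha b hb hab =>
    disjoint_support_of_dotProduct_eq_zero (hD'roots ha) (hD'roots hb) (hD'orth a ha b hb hab)
      (hD'sub a ha b hb) (hD'sub b hb a ha)
  ext a
  rw [mem_iff_isCanonicalRoot hD'roots hD'disj hD'prod,
    mem_iff_isCanonicalRoot hDroots hDdisj hDprod]
end

section
/- Let σ be an involution in S_n and f_σ the strictly lower-triangular part of its permutation matrix. If g is an invertible upper-triangular n×n matrix stabilizing f_σ under the action g.λ = (gλg⁻¹)_low, and g = uh is its decomposition into a unitriangular matrix u and a diagonal matrix h, then h also stabilizes f_σ, i.e., h f_σ h⁻¹ = f_σ. -/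
open Matrix

/-- `f_σ`: the strictly lower-triangular part of the permutation matrix of `σ`. -/
def fMat {n : ℕ} (σ : Equiv.Perm (Fin n)) : Matrix (Fin n) (Fin n) ℂ :=
  fun i j => if σ i = j ∧ j < i then 1 else 0

theorem stmt17 (n : ℕ) (σ : Equiv.Perm (Fin n)) (hσ : σ * σ = 1)
    (g u : Matrix (Fin n) (Fin n) ℂ) (d : Fin n → ℂ)
    (hg_upper : ∀ k l : Fin n, l < k → g k l = 0)
    (hg_inv : IsUnit g)
    (hu_upper : ∀ k l : Fin n, l < k → u k l = 0)
    (hu_diag : ∀ k : Fin n, u k k = 1)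
    (hd : ∀ k, d k ≠ 0)
    (hfact : g = u * diagonal d)
    (hstab : lowPart (g * fMat σ * g⁻¹) = fMat σ) :
    diagonal d * fMat σ * (diagonal d)⁻¹ = fMat σ := by
  have hinv : ∀ x, σ (σ x) = x := by
    intro x
    have := congrArg (fun p => p x) hσ
    simpa [Equiv.Perm.mul_apply] using this
  have hdetg : IsUnit g.det := (Matrix.isUnit_iff_isUnit_det g).mp hg_inv
  have hgdiag : ∀ i, g i i = d i := by
    intro i
    rw [hfact]
    simp [Matrix.mul_diagonal, hu_diag]
  -- low parts of g*f and f*g agree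
  have hlow : ∀ i j : Fin n, j < i → (g * fMat σ) i j = (fMat σ * g) i j := by
    intro i j hij
    have h2 : g * fMat σ = (g * fMat σ * g⁻¹) * g := by
      rw [Matrix.mul_assoc, Matrix.nonsing_inv_mul g hdetg, Matrix.mul_one]
    have hterm : ∀ k, (g * fMat σ * g⁻¹) i k * g k j = fMat σ i k * g k j := by
      intro k
      by_cases hk : j < k
      · rw [hg_upper k j hk, mul_zero, mul_zero]
      · have hk' : k < i := lt_of_le_of_lt (not_lt.mp hk) hij
        have h1 := congrFun (congrFun hstab i) k
        simp only [lowPart, hk', if_true] at h1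
        rw [h1]
    calc (g * fMat σ) i j = ((g * fMat σ * g⁻¹) * g) i j := by rw [← h2]
      _ = ∑ k, (g * fMat σ * g⁻¹) i k * g k j := Matrix.mul_apply
      _ = ∑ k, fMat σ i k * g k j := Finset.sum_congr rfl (fun k _ => hterm k)
      _ = (fMat σ * g) i j := (Matrix.mul_apply).symm
  -- d is σ-invariant on descents
  have hdeq : ∀ i : Fin n, σ i < i → d i = d (σ i) := by
    intro i hi
    have h := hlow i (σ i) hi
    have hL : (g * fMat σ) i (σ i) = g i i := by
      rw [Matrix.mul_apply, Finset.sum_eq_single i]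
      · simp [fMat, hinv, hi]
      · intro k _ hk
        have hz : fMat σ k (σ i) = 0 := by
          simp only [fMat]
          rw [if_neg]
          rintro ⟨h1, -⟩
          exact hk (σ.injective h1)
        rw [hz, mul_zero]
      · intro h; exact absurd (Finset.mem_univ i) h
    have hR : (fMat σ * g) i (σ i) = g (σ i) (σ i) := by
      rw [Matrix.mul_apply, Finset.sum_eq_single (σ i)]
      · simp [fMat, hi]
      · intro k _ hk
        have hz : fMat σ i k = 0 := by
          simp only [fMat]
          rw [if_neg]
          rintro ⟨h1, -⟩
          exact hk h1.symm
        rw [hz, zero_mul]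
      · intro h; exact absurd (Finset.mem_univ (σ i)) h
    rw [hL, hR, hgdiag, hgdiag] at h
    exact h
  have hDinv : (diagonal d)⁻¹ = diagonal (fun k => (d k)⁻¹) := by
    apply Matrix.inv_eq_right_inv
    rw [Matrix.diagonal_mul_diagonal]
    have : (fun k => d k * (d k)⁻¹) = fun _ => (1 : ℂ) :=
      funext fun k => mul_inv_cancel₀ (hd k)
    rw [this, Matrix.diagonal_one]
  rw [hDinv]
  ext i j
  by_cases hij : σ i = j ∧ j < i
  · obtain ⟨h1, h2⟩ := hij
    subst h1
    have hdij : d i = d (σ i) := hdeq i h2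
    simp [Matrix.diagonal_mul, Matrix.mul_diagonal, fMat, h2, hdij,
      mul_inv_cancel₀ (hd (σ i))]
  · simp [Matrix.diagonal_mul, Matrix.mul_diagonal, fMat, hij]
end
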